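/- arXiv:1706.03852 — 2 statements merged into one kernel-verified Lean document; each statement's English description precedes it below -/
import Mathlib

section
/- The bogus ORAM construction satisfies the Goldreich–Ostrovsky definition restricted to finite input sequences: if the output-length random variables |ORAMWrapper(RAM^f)(A₁)| and |ORAMWrapper(RAM^f)(A₂)| are identically distributed, then the full output sequences ORAMWrapper(RAM^f)(A₁) and ORAMWrapper(RAM^f)(A₂) are identically distributed. -/
open MeasureTheory

/-- The bogus ORAM wrapper: first output `RAMf A ω`, then pad with a suffix
(drawn from an a-priori fixed distribution depending only on the required padding
length) so that the total output length equals `enc (RAMf A ω)`. -/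
def bogusWrap {α β Ω Ω' : Type*} (RAMf : List α → Ω → List β)
    (enc : List β → ℕ) (pad : ℕ → Ω' → List β) (A : List α) (p : Ω × Ω') : List β :=
  RAMf A p.1 ++ pad (enc (RAMf A p.1) - (RAMf A p.1).length) p.2

/-!
Given its length `n`, the output of `bogusWrap RAMf enc pad A` is `S ++ pad (n - S.length) ω'`
with `S = enc⁻¹ n`, independently of `A`. Hence the fibre of the output over `s` is a rectangle
`{ω | enc (RAMf A ω) = s.length} ×ˢ T`, with `T ⊆ Ω'` depending on `s` only, and its measure is
`P(length = s.length) * ν T`.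

No measurability is assumed, so fibres are measured by outer measure and `Measure.map` may be
the junk value `0`. Measurability transfers along equal fibre measures: if the fibres of a map
into a countable space have outer measures summing to the total mass, then each fibre `F`
satisfies `μ F + μ Fᶜ ≤ μ univ`, so the measurable hulls of `F` and of `Fᶜ` overlap in a null
set and `F` is null measurable.
-/

open Set

namespace MeasureTheory

variable {X Y : Type*} [MeasurableSpace X] [MeasurableSpace Y] {μ : Measure X}

theorem nullMeasurableSet_of_measure_add_measure_compl_le [IsFiniteMeasure μ] {s : Set X}
    (h : μ s + μ sᶜ ≤ μ univ) : NullMeasurableSet s μ := by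
  set H := toMeasurable μ s
  set G := toMeasurable μ sᶜ
  have hunion : H ∪ G = univ :=
    eq_univ_of_forall fun x => (em (x ∈ s)).imp (subset_toMeasurable μ s ·)
      (subset_toMeasurable μ sᶜ ·)
  have hinter : μ (H ∩ G) = 0 := by
    have := measure_union_add_inter (μ := μ) H (measurableSet_toMeasurable μ sᶜ)
    rw [hunion, measure_toMeasurable, measure_toMeasurable] at this
    rw [← nonpos_iff_eq_zero, ← ENNReal.add_le_add_iff_left (measure_ne_top μ univ), add_zero]
    exact this.trans_le h
  have hHs : μ (H \ s) = 0 :=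
    measure_mono_null (inter_subset_inter_right H (subset_toMeasurable μ sᶜ)) hinter
  refine (measurableSet_toMeasurable μ s).nullMeasurableSet.congr ?_
  exact ae_eq_set.2 ⟨hHs, by simp [sdiff_eq_empty.2 (subset_toMeasurable μ s)]⟩

theorem _root_.AEMeasurable.of_map_eq [NeZero μ] {f g : X → Y} (hf : AEMeasurable f μ)
    (h : μ.map f = μ.map g) : AEMeasurable g μ :=
  aemeasurable_of_map_neZero ⟨h ▸ (Measure.map_ne_zero_iff hf).2 (NeZero.ne μ)⟩

theorem tsum_measure_preimage_singleton_le_of_aemeasurable [MeasurableSingletonClass Y]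
    {f : X → Y} (hf : AEMeasurable f μ) :
    ∑' y, μ (f ⁻¹' {y}) ≤ μ univ :=
  tsum_measure_le_measure_univ (fun y => hf.nullMeasurable (measurableSet_singleton y))
    fun _ _ hyz => ((disjoint_singleton.2 hyz).preimage f).aedisjoint

theorem nullMeasurable_of_tsum_measure_preimage_singleton_le [Countable Y] [IsFiniteMeasure μ]
    {g : X → Y} (h : ∑' y, μ (g ⁻¹' {y}) ≤ μ univ) : NullMeasurable g μ := by
  intro t _
  rw [← biUnion_preimage_singleton]
  refine .biUnion t.to_countable fun y _ => ?_
  refine nullMeasurableSet_of_measure_add_measure_compl_le (le_trans ?_ h)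
  calc μ (g ⁻¹' {y}) + μ (g ⁻¹' {y})ᶜ
      ≤ ∑' z : ({y} : Set Y), μ (g ⁻¹' {(z : Y)}) +
          ∑' z : ({y}ᶜ : Set Y), μ (g ⁻¹' {(z : Y)}) := by
        gcongr
        · simp
        · rw [← preimage_compl, ← biUnion_preimage_singleton]
          exact measure_biUnion_le μ (to_countable _) _
    _ = ∑' y, μ (g ⁻¹' {y}) :=
        ENNReal.summable.tsum_add_tsum_compl (f := fun z => μ (g ⁻¹' {z})) ENNReal.summable

theorem aemeasurable_of_measure_preimage_singleton_eq [Countable Y]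
    [MeasurableSingletonClass Y] [IsFiniteMeasure μ] {f g : X → Y}
    (hf : AEMeasurable f μ) (h : ∀ y, μ (f ⁻¹' {y}) = μ (g ⁻¹' {y})) : AEMeasurable g μ :=
  (nullMeasurable_of_tsum_measure_preimage_singleton_le <| by
    simpa only [h] using tsum_measure_preimage_singleton_le_of_aemeasurable hf).aemeasurable

theorem map_eq_map_of_measure_preimage_singleton_eq [Countable Y]
    [MeasurableSingletonClass Y] [IsFiniteMeasure μ] {f g : X → Y}
    (h : ∀ y, μ (f ⁻¹' {y}) = μ (g ⁻¹' {y})) : μ.map f = μ.map g := by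
  by_cases hf : AEMeasurable f μ
  · have hg := aemeasurable_of_measure_preimage_singleton_eq hf h
    refine Measure.ext_of_singleton fun y => ?_
    rw [Measure.map_apply_of_aemeasurable hf (measurableSet_singleton y),
      Measure.map_apply_of_aemeasurable hg (measurableSet_singleton y), h]
  · have hg : ¬ AEMeasurable g μ := fun hg =>
      hf (aemeasurable_of_measure_preimage_singleton_eq hg fun y => (h y).symm)
    rw [Measure.map_of_not_aemeasurable hf, Measure.map_of_not_aemeasurable hg]

end MeasureTheory

section BogusWrap

variable {α β Ω Ω' : Type*} {RAMf : List α → Ω → List β} {enc : List β → ℕ}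
  {pad : ℕ → Ω' → List β}

theorem length_bogusWrap (henc_ge : ∀ S : List β, S.length ≤ enc S)
    (hpad_len : ∀ k ω', (pad k ω').length = k) (A : List α) (p : Ω × Ω') :
    (bogusWrap RAMf enc pad A p).length = enc (RAMf A p.1) := by
  simp [bogusWrap, hpad_len, Nat.add_sub_cancel' (henc_ge _)]

theorem preimage_bogusWrap_singleton (henc_inj : Function.Injective enc)
    (henc_ge : ∀ S : List β, S.length ≤ enc S) (hpad_len : ∀ k ω', (pad k ω').length = k)
    (A : List α) (s : List β) :
    bogusWrap RAMf enc pad A ⁻¹' {s} =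
      {ω | enc (RAMf A ω) = s.length} ×ˢ
        {ω' | let S := Function.invFun enc s.length; S ++ pad (enc S - S.length) ω' = s} := by
  ext ⟨ω, ω'⟩
  simp only [mem_preimage, mem_singleton_iff, mem_prod, mem_ofPred_eq]
  constructor
  · rintro rfl
    rw [length_bogusWrap henc_ge hpad_len, Function.leftInverse_invFun henc_inj]
    exact ⟨rfl, rfl⟩
  · rintro ⟨hlen, hs⟩
    rw [← hs, ← hlen, Function.leftInverse_invFun henc_inj]
    rfl

theorem preimage_length_bogusWrap_singleton (henc_ge : ∀ S : List β, S.length ≤ enc S)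
    (hpad_len : ∀ k ω', (pad k ω').length = k) (A : List α) (n : ℕ) :
    (fun p : Ω × Ω' => (bogusWrap RAMf enc pad A p).length) ⁻¹' {n} =
      {ω | enc (RAMf A ω) = n} ×ˢ univ := by
  ext p
  simp [length_bogusWrap henc_ge hpad_len]

end BogusWrap

theorem bogusORAM_satisfies_GO_finite_general
    {α β Ω Ω' : Type*} [MeasurableSpace Ω] [MeasurableSpace Ω']
    [MeasurableSpace (List β)] [MeasurableSingletonClass (List β)]
    (μ : Measure Ω) (ν : Measure Ω') [IsProbabilityMeasure μ] [IsProbabilityMeasure ν]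
    (RAMf : List α → Ω → List β)
    (enc : List β → ℕ) (henc_inj : Function.Injective enc)
    (henc_ge : ∀ S : List β, S.length ≤ enc S)
    (pad : ℕ → Ω' → List β) (hpad_len : ∀ k ω', (pad k ω').length = k)
    (A₁ A₂ : List α)
    (hlen : (μ.prod ν).map (fun p => (bogusWrap RAMf enc pad A₁ p).length) =
      (μ.prod ν).map (fun p => (bogusWrap RAMf enc pad A₂ p).length)) :
    (μ.prod ν).map (bogusWrap RAMf enc pad A₁) =
      (μ.prod ν).map (bogusWrap RAMf enc pad A₂) := by
  have : Countable (List β) := henc_inj.countable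
  by_cases h₁ : AEMeasurable (fun p => (bogusWrap RAMf enc pad A₁ p).length) (μ.prod ν)
  · have h₂ := h₁.of_map_eq hlen
    have hcode (n : ℕ) : μ {ω | enc (RAMf A₁ ω) = n} = μ {ω | enc (RAMf A₂ ω) = n} := by
      simpa [Measure.map_apply_of_aemeasurable h₁ (measurableSet_singleton n),
        Measure.map_apply_of_aemeasurable h₂ (measurableSet_singleton n),
        preimage_length_bogusWrap_singleton henc_ge hpad_len] using congrArg (· {n}) hlen
    refine map_eq_map_of_measure_preimage_singleton_eq fun s => ?_
    rw [preimage_bogusWrap_singleton henc_inj henc_ge hpad_len,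
      preimage_bogusWrap_singleton henc_inj henc_ge hpad_len, Measure.prod_prod,
      Measure.prod_prod, hcode]
  · have hW (A : List α) (hA : ¬ AEMeasurable (fun p => (bogusWrap RAMf enc pad A p).length)
        (μ.prod ν)) : ¬ AEMeasurable (bogusWrap RAMf enc pad A) (μ.prod ν) :=
      fun h => hA ((measurable_of_countable _).comp_aemeasurable h)
    have h₂ := fun h => h₁ (AEMeasurable.of_map_eq h hlen.symm)
    rw [Measure.map_of_not_aemeasurable (hW A₁ h₁), Measure.map_of_not_aemeasurable (hW A₂ h₂)]

/-- The bogus ORAM construction satisfies the Goldreich–Ostrovsky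
definition restricted to finite input sequences: identically distributed output
lengths imply identically distributed output sequences. -/
theorem bogusORAM_satisfies_GO_finite
    {α β Ω Ω' : Type*} [MeasurableSpace Ω] [MeasurableSpace Ω']
    [MeasurableSpace (List β)] [MeasurableSingletonClass (List β)]
    (μ : Measure Ω) (ν : Measure Ω') [IsProbabilityMeasure μ] [IsProbabilityMeasure ν]
    (RAMf : List α → Ω → List β)
    (enc : List β → ℕ) (henc_inj : Function.Injective enc)
    (henc_ge : ∀ S : List β, S.length ≤ enc S) (henc_pos : ∀ S : List β, 0 < enc S)
    (pad : ℕ → Ω' → List β) (hpad_len : ∀ k ω', (pad k ω').length = k)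
    (A₁ A₂ : List α)
    (hlen : (μ.prod ν).map (fun p => (bogusWrap RAMf enc pad A₁ p).length) =
      (μ.prod ν).map (fun p => (bogusWrap RAMf enc pad A₂ p).length)) :
    (μ.prod ν).map (bogusWrap RAMf enc pad A₁) =
      (μ.prod ν).map (bogusWrap RAMf enc pad A₂) :=
  bogusORAM_satisfies_GO_finite_general μ ν RAMf enc henc_inj henc_ge pad hpad_len A₁ A₂ hlen
end

section
/- Unlinkability of Path ORAM path accesses: if on each logical access to a block the block's leaf label is resampled uniformly at random from the 2^L leaves independently of all past randomness, then the sequence of observed accessed paths is a sequence of i.i.d. uniform random variables over the leaves, and in particular its distribution is independent of the logical input sequence. -/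
/-!
Every observed label is one coordinate of the randomness: the initial label of the accessed
block, or the label drawn at the previous access to that block. Distinct accesses read distinct
coordinates, since a draw made at access `j` is read only by the next access to the same block.
So the observation is the restriction of a uniform random function to an injectively embedded
index set, and such a restriction is again uniform.
-/

/-- The sequence of observed paths in Path ORAM.  The randomness consists of the
initial (uniform, independent) leaf labels `ω.1 : Block → Fin (2^L)` and the fresh
(uniform, independent) labels `ω.2 i` drawn at each access `i`.  The path observed at
access `i` is the current label of block `A i`: the label freshly drawn at the most
recent previous access to the same block, or the initial label if there is none. -/
def observedPaths {Block : Type*} [DecidableEq Block] (L n : ℕ)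
    (A : Fin n → Block)
    (ω : (Block → Fin (2 ^ L)) × (Fin n → Fin (2 ^ L))) : Fin n → Fin (2 ^ L) :=
  fun i =>
    let prev : Finset (Fin n) := Finset.univ.filter fun j => j < i ∧ A j = A i
    if h : prev.Nonempty then ω.2 (prev.max' h) else ω.1 (A i)

namespace PMF

variable {α β : Type*} [Fintype α] [Nonempty α] [Fintype β] [Nonempty β]

theorem uniformOfFintype_map_equiv (e : α ≃ β) :
    (uniformOfFintype α).map e = uniformOfFintype β := by
  ext b
  rw [map_apply, tsum_eq_single (e.symm b) fun a ha => if_neg fun h => ha (by simp [h])]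
  simp [Fintype.card_congr e]

theorem uniformOfFintype_map_fst :
    (uniformOfFintype (α × β)).map Prod.fst = uniformOfFintype α := by
  classical
  ext a
  simp only [map_apply, tsum_fintype, uniformOfFintype_apply, Fintype.sum_prod_type,
    Fintype.card_prod, Nat.cast_mul]
  rw [Finset.sum_comm]
  simp only [Finset.sum_ite_eq, Finset.mem_univ, if_true, Finset.sum_const, Finset.card_univ,
    nsmul_eq_mul]
  rw [ENNReal.mul_inv (by simp) (by simp), mul_left_comm, ENNReal.mul_inv_cancel (by simp) (by simp),
    mul_one]

theorem uniformOfFintype_map_comp_of_injective {ι κ γ : Type*} [Fintype ι] [DecidableEq ι]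
    [Fintype κ] [DecidableEq κ] [Fintype γ] [Nonempty γ] {c : ι → κ} (hc : c.Injective) :
    (uniformOfFintype (κ → γ)).map (· ∘ c) = uniformOfFintype (ι → γ) := by
  classical
  let split := Equiv.piEquivPiSubtypeProd (· ∈ Set.range c) fun _ => γ
  let reindex := (Equiv.ofInjective c hc).symm.arrowCongr (Equiv.refl γ)
  have hrestrict : (· ∘ c) = reindex ∘ Prod.fst ∘ split := rfl
  rw [hrestrict, ← map_comp, ← map_comp, uniformOfFintype_map_equiv, uniformOfFintype_map_fst,
    uniformOfFintype_map_equiv]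

end PMF

section

variable {Block : Type*} [DecidableEq Block] {n : ℕ} (A : Fin n → Block)

def prevAccesses (i : Fin n) : Finset (Fin n) :=
  Finset.univ.filter fun j => j < i ∧ A j = A i

theorem mem_prevAccesses {i j : Fin n} : j ∈ prevAccesses A i ↔ j < i ∧ A j = A i := by
  simp [prevAccesses]

/-- `Block ⊕ Fin n` indexes the randomness: `inl b` is the initial label of `b`, `inr j` the
label drawn at access `j`. -/
def accessIndex (i : Fin n) : Block ⊕ Fin n :=
  if h : (prevAccesses A i).Nonempty then .inr ((prevAccesses A i).max' h) else .inl (A i)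

theorem accessIndex_injective : (accessIndex A).Injective := by
  refine Function.Injective.of_lt_imp_ne fun i i' hlt heq => ?_
  have hmem : A i = A i' → i ∈ prevAccesses A i' := fun h => (mem_prevAccesses A).2 ⟨hlt, h⟩
  unfold accessIndex at heq
  split_ifs at heq with h h' h'
  · obtain ⟨hj_lt, hj_eq⟩ := (mem_prevAccesses A).1 ((prevAccesses A i).max'_mem h)
    rw [Sum.inr.inj heq] at hj_lt hj_eq
    obtain ⟨-, hj_eq'⟩ := (mem_prevAccesses A).1 ((prevAccesses A i').max'_mem h')
    exact ((prevAccesses A i').le_max' i (hmem (hj_eq.symm.trans hj_eq'))).not_gt hj_lt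
  · exact h' ⟨i, hmem (Sum.inl.inj heq)⟩

theorem observedPaths_eq_comp_accessIndex (L : ℕ) :
    observedPaths L n A = (· ∘ accessIndex A) ∘ (Equiv.sumArrowEquivProdArrow _ _ _).symm := by
  ext ω i : 2
  show _ = Sum.elim ω.1 ω.2 (accessIndex A i)
  unfold accessIndex
  split_ifs with h
  exacts [dif_pos h, dif_neg h]

end

/-- Unlinkability of Path ORAM path accesses: since each accessed leaf
label was set by an independent uniform draw, the observed sequence of paths
`(s₁, …, sₙ)` is i.i.d. uniform on the `2^L` leaves — i.e., its distribution is the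
uniform distribution on `(Fin (2^L))ⁿ`, regardless of the logical input sequence `A`. -/
theorem pathORAM_observed_paths_uniform
    {Block : Type*} [Fintype Block] [DecidableEq Block] (L n : ℕ)
    (A : Fin n → Block) :
    (PMF.uniformOfFintype ((Block → Fin (2 ^ L)) × (Fin n → Fin (2 ^ L)))).map
        (observedPaths L n A) =
      PMF.uniformOfFintype (Fin n → Fin (2 ^ L)) := by
  rw [observedPaths_eq_comp_accessIndex, ← PMF.map_comp, PMF.uniformOfFintype_map_equiv,
    PMF.uniformOfFintype_map_comp_of_injective (accessIndex_injective A)]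
end
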